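/- arXiv:1108.2384 — 10 statements merged into one kernel-verified Lean document; each statement's English description precedes it below -/
import Mathlib

section
/- Let 𝒢 = (V, A) be an ordering relations graph. Then ℒ[𝒢] = (H, ⊆) is a prime algebraic coherent partial order, and its complete primes are exactly the elements of the form [v] = {v' ∈ V | (v',v) ∈ B*}, where B = {(x,y) ∈ A | (y,x) ∉ A}. -/
open Relation

/-- A subset `W` of vertices is conflict-free w.r.t. the arc relation `A`. -/
def ConflictFree {V : Type*} (A : V → V → Prop) (W : Set V) : Prop :=
  ∀ v₁ ∈ W, ∀ v₂ ∈ W, ¬ A v₁ v₂ ∨ ¬ A v₂ v₁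

/-- A subset `W` of vertices is left-closed w.r.t. the arc relation `A`. -/
def LeftClosed {V : Type*} (A : V → V → Prop) (W : Set V) : Prop :=
  ∀ v₁ ∈ W, ∀ v₂ : V, A v₂ v₁ → ¬ A v₁ v₂ → v₂ ∈ W

/-- `H` : the set of left-closed conflict-free subsets of vertices; ordered by
inclusion (via the subtype order) this is the poset `ℒ[𝒢]`. -/
def OrgH {V : Type*} (A : V → V → Prop) : Set (Set V) :=
  {W | LeftClosed A W ∧ ConflictFree A W}

/-- `[v] = {v' | (v',v) ∈ B*}` where `B = {(x,y) ∈ A | (y,x) ∉ A}`. -/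
def primeOf {V : Type*} (A : V → V → Prop) (v : V) : Set V :=
  {v' | ReflTransGen (fun x y => A x y ∧ ¬ A y x) v' v}

/-- Two elements of a poset are consistent iff they have a common upper bound. -/
def Consistent {D : Type*} [PartialOrder D] (x y : D) : Prop :=
  ∃ z : D, x ≤ z ∧ y ≤ z

/-- A subset of a poset is pairwise consistent. -/
def PairwiseConsistent {D : Type*} [PartialOrder D] (X : Set D) : Prop :=
  ∀ x ∈ X, ∀ y ∈ X, Consistent x y

/-- A poset is coherent iff every pairwise consistent subset has a least upper bound. -/
def Coherent (D : Type*) [PartialOrder D] : Prop :=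
  ∀ X : Set D, PairwiseConsistent X → ∃ l : D, IsLUB X l

/-- An element `p` is a complete prime iff whenever a subset has a least upper
bound above `p`, then `p` lies below some member of the subset. -/
def CompletePrime {D : Type*} [PartialOrder D] (p : D) : Prop :=
  ∀ (X : Set D) (l : D), IsLUB X l → p ≤ l → ∃ y ∈ X, p ≤ y

/-- A poset is prime algebraic iff its complete primes form a denumerable set and
every element is the least upper bound of the complete primes below it. -/
def PrimeAlgebraic (D : Type*) [PartialOrder D] : Prop :=
  {p : D | CompletePrime p}.Countable ∧
  ∀ x : D, IsLUB {p : D | CompletePrime p ∧ p ≤ x} x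

section Aux

variable {V : Type*} (A : V → V → Prop)

lemma cf_mono {W Z : Set V} (h : W ⊆ Z) (hZ : ConflictFree A Z) : ConflictFree A W :=
  fun v₁ h₁ v₂ h₂ => hZ v₁ (h h₁) v₂ (h h₂)

lemma empty_mem_orgH : (∅ : Set V) ∈ OrgH A :=
  ⟨fun v hv => (Set.notMem_empty v hv).elim, fun v hv => (Set.notMem_empty v hv).elim⟩

lemma self_mem_primeOf (v : V) : v ∈ primeOf A v := ReflTransGen.refl

lemma primeOf_leftClosed (v : V) : LeftClosed A (primeOf A v) := by
  intro v₁ h₁ v₂ hA hnA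
  exact ReflTransGen.head ⟨hA, hnA⟩ h₁

lemma primeOf_subset {W : Set V} (hW : LeftClosed A W) {v : V} (hv : v ∈ W) :
    primeOf A v ⊆ W := by
  intro u hu
  induction hu using ReflTransGen.head_induction_on with
  | refl => exact hv
  | head h _ ih => exact hW _ ih _ h.1 h.2

lemma primeOf_mem_orgH {W : Set V} (hW : W ∈ OrgH A) {v : V} (hv : v ∈ W) :
    primeOf A v ∈ OrgH A :=
  ⟨primeOf_leftClosed A v, cf_mono A (primeOf_subset A hW.1 hv) hW.2⟩

lemma union_mem (X : Set ↥(OrgH A)) (hX : PairwiseConsistent X) :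
    (⋃ W ∈ X, (W : Set V)) ∈ OrgH A := by
  constructor
  · intro v₁ h₁ v₂ hA hnA
    obtain ⟨W, hW, hv⟩ := Set.mem_iUnion₂.1 h₁
    exact Set.mem_iUnion₂.2 ⟨W, hW, W.2.1 v₁ hv v₂ hA hnA⟩
  · intro v₁ h₁ v₂ h₂
    obtain ⟨W₁, hW₁, hv₁⟩ := Set.mem_iUnion₂.1 h₁
    obtain ⟨W₂, hW₂, hv₂⟩ := Set.mem_iUnion₂.1 h₂
    obtain ⟨Z, hZ₁, hZ₂⟩ := hX W₁ hW₁ W₂ hW₂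
    exact Z.2.2 v₁ (hZ₁ hv₁) v₂ (hZ₂ hv₂)

lemma isLUB_union (X : Set ↥(OrgH A)) (h : (⋃ W ∈ X, (W : Set V)) ∈ OrgH A) :
    IsLUB X ⟨_, h⟩ := by
  constructor
  · intro W hW
    exact fun x hx => Set.mem_iUnion₂.2 ⟨W, hW, hx⟩
  · intro u hu x hx
    obtain ⟨W, hW, hxW⟩ := Set.mem_iUnion₂.1 hx
    exact hu hW hxW

lemma completePrime_of_primeOf (p : ↥(OrgH A)) (v : V)
    (hp : (p : Set V) = primeOf A v) : CompletePrime p := by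
  intro X l hlub hpl
  set U : Set V := ⋃ W ∈ X, (W : Set V) with hU
  have hUl : U ⊆ (l : Set V) := by
    intro x hx
    obtain ⟨W, hW, hxW⟩ := Set.mem_iUnion₂.1 hx
    exact hlub.1 hW hxW
  have hUH : U ∈ OrgH A := by
    constructor
    · intro v₁ h₁ v₂ hA hnA
      obtain ⟨W, hW, hv⟩ := Set.mem_iUnion₂.1 h₁
      exact Set.mem_iUnion₂.2 ⟨W, hW, W.2.1 v₁ hv v₂ hA hnA⟩
    · exact cf_mono A hUl l.2.2
  have hub : (⟨U, hUH⟩ : ↥(OrgH A)) ∈ upperBounds X :=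
    fun W hW x hx => Set.mem_iUnion₂.2 ⟨W, hW, hx⟩
  have hlU : (l : Set V) ⊆ U := hlub.2 hub
  have hvp : v ∈ (p : Set V) := by rw [hp]; exact self_mem_primeOf A v
  have hvU : v ∈ U := hlU (hpl hvp)
  obtain ⟨W, hW, hvW⟩ := Set.mem_iUnion₂.1 hvU
  refine ⟨W, hW, ?_⟩
  show (p : Set V) ⊆ (W : Set V)
  rw [hp]; exact primeOf_subset A W.2.1 hvW

lemma primeOf_of_completePrime (p : ↥(OrgH A)) (hp : CompletePrime p) :
    ∃ v : V, (p : Set V) = primeOf A v := by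
  have hne : (p : Set V).Nonempty := by
    by_contra h
    have hpe : (p : Set V) = ∅ := Set.not_nonempty_iff_eq_empty.mp h
    have hlub : IsLUB (∅ : Set ↥(OrgH A)) ⟨∅, empty_mem_orgH A⟩ := by
      constructor
      · intro W hW; exact absurd hW (Set.notMem_empty W)
      · intro u _
        exact fun x hx => absurd hx (Set.notMem_empty x)
    obtain ⟨y, hy, -⟩ := hp ∅ _ hlub (by
      show (p : Set V) ⊆ ∅
      exact hpe.le)
    exact Set.notMem_empty y hy
  set X : Set ↥(OrgH A) := {q | ∃ v ∈ (p : Set V), (q : Set V) = primeOf A v} with hX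
  have hub : p ∈ upperBounds X := by
    rintro q ⟨v, hv, hq⟩
    show (q : Set V) ⊆ (p : Set V)
    rw [hq]; exact primeOf_subset A p.2.1 hv
  have hlub : IsLUB X p := by
    refine ⟨hub, ?_⟩
    intro u hu x hx
    have hq : (⟨primeOf A x, primeOf_mem_orgH A p.2 hx⟩ : ↥(OrgH A)) ∈ X := ⟨x, hx, rfl⟩
    exact hu hq (self_mem_primeOf A x)
  obtain ⟨q, hq, hpq⟩ := hp X p hlub le_rfl
  obtain ⟨v, hv, hqv⟩ := hq
  have h1 : (p : Set V) ⊆ (q : Set V) := hpq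
  have h2 : (q : Set V) ⊆ (p : Set V) := hub ⟨v, hv, hqv⟩
  exact ⟨v, by rw [← hqv]; exact Set.Subset.antisymm h1 h2⟩

end Aux

/-- `ℒ[𝒢] = (H, ⊆)` is a prime algebraic coherent partial order,
and its complete primes are exactly the elements of the form `[v]`. -/
theorem stmt0 {V : Type*} [Finite V] (A : V → V → Prop) :
    Coherent ↥(OrgH A) ∧ PrimeAlgebraic ↥(OrgH A) ∧
    ∀ p : ↥(OrgH A), CompletePrime p ↔ ∃ v : V, (p : Set V) = primeOf A v := by
  refine ⟨?_, ⟨?_, ?_⟩, fun p =>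
    ⟨primeOf_of_completePrime A p, fun ⟨v, hv⟩ => completePrime_of_primeOf A p v hv⟩⟩
  · intro X hX
    exact ⟨⟨_, union_mem A X hX⟩, isLUB_union A X (union_mem A X hX)⟩
  · exact Set.to_countable _
  · intro x
    constructor
    · intro q hq; exact hq.2
    · intro u hu
      intro w hw
      have hq : CompletePrime (⟨primeOf A w, primeOf_mem_orgH A x.2 hw⟩ : ↥(OrgH A)) :=
        completePrime_of_primeOf A _ w rfl
      have hle : (⟨primeOf A w, primeOf_mem_orgH A x.2 hw⟩ : ↥(OrgH A)) ≤ x :=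
        primeOf_subset A x.2.1 hw
      exact hu ⟨hq, hle⟩ (self_mem_primeOf A w)
end

section
/- Let 𝒢 = (V, A) be an ordering relations graph and let X ⊆ H be a pairwise consistent subset of ℒ[𝒢] = (H, ⊆). Then ∪X (the union of all members of X) is left-closed and conflict-free, hence ∪X ∈ H, and ∪X is the least upper bound of X in (H, ⊆); consequently ℒ[𝒢] is coherent. -/
open Relation

/-!
Two members of a pairwise consistent family lie in a common conflict-free set, so any two
vertices of the union already lie in one conflict-free set; left-closedness passes to
arbitrary unions. The union is therefore in `H`, and in the inclusion order it is the
least upper bound.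
-/

section

variable {V : Type*} {A : V → V → Prop}

theorem LeftClosed.biUnion {ι : Type*} {s : Set ι} {f : ι → Set V}
    (h : ∀ i ∈ s, LeftClosed A (f i)) : LeftClosed A (⋃ i ∈ s, f i) := by
  intro v₁ hv₁ v₂ h₂₁ h₁₂
  obtain ⟨i, hi, hv₁i⟩ := Set.mem_iUnion₂.mp hv₁
  exact Set.mem_iUnion₂.mpr ⟨i, hi, h i hi v₁ hv₁i v₂ h₂₁ h₁₂⟩

theorem ConflictFree.biUnion {ι : Type*} {s : Set ι} {f : ι → Set V}
    (h : ∀ i ∈ s, ∀ j ∈ s, ∃ W, ConflictFree A W ∧ f i ⊆ W ∧ f j ⊆ W) :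
    ConflictFree A (⋃ i ∈ s, f i) := by
  intro v₁ hv₁ v₂ hv₂
  obtain ⟨i, hi, hv₁i⟩ := Set.mem_iUnion₂.mp hv₁
  obtain ⟨j, hj, hv₂j⟩ := Set.mem_iUnion₂.mp hv₂
  obtain ⟨W, hW, hiW, hjW⟩ := h i hi j hj
  exact hW v₁ (hiW hv₁i) v₂ (hjW hv₂j)

theorem isLUB_biUnion_coe {S : Set (Set V)} (X : Set S) (hU : (⋃ x ∈ X, (x : Set V)) ∈ S) :
    IsLUB X (⟨⋃ x ∈ X, (x : Set V), hU⟩ : S) :=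
  IsLUB.of_image Subtype.coe_le_coe <| by
    simpa only [Set.sSup_eq_sUnion, Set.sUnion_image] using isLUB_sSup (Subtype.val '' X)

theorem biUnion_mem_orgH {X : Set (OrgH A)} (hX : PairwiseConsistent X) :
    (⋃ x ∈ X, (x : Set V)) ∈ OrgH A :=
  ⟨LeftClosed.biUnion fun x _ => x.2.1,
    ConflictFree.biUnion fun x hx y hy =>
      let ⟨z, hxz, hyz⟩ := hX x hx y hy
      ⟨z, z.2.2, hxz, hyz⟩⟩

theorem coherent_orgH (A : V → V → Prop) : Coherent (OrgH A) :=
  fun X hX => ⟨_, isLUB_biUnion_coe X (biUnion_mem_orgH hX)⟩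

end

theorem stmt1_general {V : Type*} (A : V → V → Prop)
    (X : Set ↥(OrgH A)) (hX : PairwiseConsistent X) :
    LeftClosed A (⋃ x ∈ X, (x : Set V)) ∧
    ConflictFree A (⋃ x ∈ X, (x : Set V)) ∧
    (∃ hU : (⋃ x ∈ X, (x : Set V)) ∈ OrgH A,
      IsLUB X (⟨⋃ x ∈ X, (x : Set V), hU⟩ : ↥(OrgH A))) ∧
    Coherent ↥(OrgH A) := by
  have hU := biUnion_mem_orgH hX
  exact ⟨hU.1, hU.2, ⟨hU, isLUB_biUnion_coe X hU⟩, coherent_orgH A⟩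

/-- If `X ⊆ H` is pairwise consistent in `ℒ[𝒢] = (H, ⊆)`, then
`∪X` is left-closed and conflict-free, hence `∪X ∈ H`, and `∪X` is the least
upper bound of `X`; consequently `ℒ[𝒢]` is coherent. -/
theorem stmt1 {V : Type*} [Finite V] (A : V → V → Prop)
    (X : Set ↥(OrgH A)) (hX : PairwiseConsistent X) :
    LeftClosed A (⋃ x ∈ X, (x : Set V)) ∧
    ConflictFree A (⋃ x ∈ X, (x : Set V)) ∧
    (∃ hU : (⋃ x ∈ X, (x : Set V)) ∈ OrgH A,
      IsLUB X (⟨⋃ x ∈ X, (x : Set V), hU⟩ : ↥(OrgH A))) ∧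
    Coherent ↥(OrgH A) :=
  stmt1_general A X hX
end

section
/- Let 𝒢 = (V, A) be an ordering relations graph and let x, y ∈ H be elements of ℒ[𝒢] = (H, ⊆). Then x and y are consistent in (H, ⊆) if and only if x ∪ y is conflict-free; and in that case x ∪ y ∈ H and x ∪ y is the least upper bound of x and y in (H, ⊆). -/
open Relation

theorem ConflictFree.mono {V : Type*} {A : V → V → Prop} {s t : Set V} (hst : s ⊆ t)
    (ht : ConflictFree A t) : ConflictFree A s :=
  fun v₁ hv₁ v₂ hv₂ => ht v₁ (hst hv₁) v₂ (hst hv₂)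

theorem LeftClosed.union {V : Type*} {A : V → V → Prop} {s t : Set V} (hs : LeftClosed A s)
    (ht : LeftClosed A t) : LeftClosed A (s ∪ t) := by
  rintro v₁ (hv₁ | hv₁) v₂ h21 h12
  · exact Or.inl (hs v₁ hv₁ v₂ h21 h12)
  · exact Or.inr (ht v₁ hv₁ v₂ h21 h12)

namespace OrgH

variable {V : Type*} {A : V → V → Prop}

theorem union_mem {s t : Set V} (hs : s ∈ OrgH A) (ht : t ∈ OrgH A)
    (hcf : ConflictFree A (s ∪ t)) : s ∪ t ∈ OrgH A :=
  ⟨hs.1.union ht.1, hcf⟩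

theorem conflictFree_union_of_consistent {x y : ↥(OrgH A)} (hxy : Consistent x y) :
    ConflictFree A ((x : Set V) ∪ y) := by
  obtain ⟨z, hxz, hyz⟩ := hxy
  exact z.2.2.mono (Set.union_subset hxz hyz)

theorem isLUB_pair_union {x y : ↥(OrgH A)} (hcf : ConflictFree A ((x : Set V) ∪ y)) :
    IsLUB {x, y} (⟨(x : Set V) ∪ y, union_mem x.2 y.2 hcf⟩ : ↥(OrgH A)) := by
  refine ⟨?_, fun z hz =>
    Set.union_subset (hz (Set.mem_insert _ _)) (hz (Set.mem_insert_of_mem _ rfl))⟩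
  rintro z (rfl | rfl)
  · exact Set.subset_union_left
  · exact Set.subset_union_right

theorem consistent_of_conflictFree_union {x y : ↥(OrgH A)}
    (hcf : ConflictFree A ((x : Set V) ∪ y)) : Consistent x y :=
  ⟨_, (isLUB_pair_union hcf).1 (Set.mem_insert _ _),
    (isLUB_pair_union hcf).1 (Set.mem_insert_of_mem _ rfl)⟩

end OrgH

theorem stmt2_general {V : Type*} (A : V → V → Prop) (x y : ↥(OrgH A)) :
    (Consistent x y ↔ ConflictFree A ((x : Set V) ∪ (y : Set V))) ∧
    (ConflictFree A ((x : Set V) ∪ (y : Set V)) →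
      ∃ h : ((x : Set V) ∪ (y : Set V)) ∈ OrgH A,
        IsLUB {x, y} (⟨(x : Set V) ∪ (y : Set V), h⟩ : ↥(OrgH A))) :=
  ⟨⟨OrgH.conflictFree_union_of_consistent, OrgH.consistent_of_conflictFree_union⟩,
    fun hcf => ⟨_, OrgH.isLUB_pair_union hcf⟩⟩

/-- Elements `x, y` of `ℒ[𝒢] = (H, ⊆)` are consistent iff
`x ∪ y` is conflict-free; in that case `x ∪ y ∈ H` and `x ∪ y` is the least
upper bound of `x` and `y`. -/
theorem stmt2 {V : Type*} [Finite V] (A : V → V → Prop) (x y : ↥(OrgH A)) :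
    (Consistent x y ↔ ConflictFree A ((x : Set V) ∪ (y : Set V))) ∧
    (ConflictFree A ((x : Set V) ∪ (y : Set V)) →
      ∃ h : ((x : Set V) ∪ (y : Set V)) ∈ OrgH A,
        IsLUB {x, y} (⟨(x : Set V) ∪ (y : Set V), h⟩ : ↥(OrgH A))) :=
  stmt2_general A x y
end

section
/- Let 𝒢 = (V, A) be an ordering relations graph. Every element X ∈ H of ℒ[𝒢] = (H, ⊆) satisfies X = ∪{[v] | v ∈ X}, and this union is the least upper bound in (H, ⊆) of the set {[v] | v ∈ X}; hence every element of ℒ[𝒢] is the least upper bound of the complete primes below it, i.e. ℒ[𝒢] is prime algebraic. -/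
/-!
The prime `[v]` is the smallest left-closed set containing `v`, so a left-closed `X` is the
union of the `[v]` with `v ∈ X`. Least upper bounds in `ℒ[𝒢]` are unions: a union of
left-closed sets is left-closed, and a union of sets below a common conflict-free bound is
conflict-free. Hence `[v] ⊆ ⊔ S` puts `v` in some member of `S`, which then contains `[v]`;
so every `[v]` is a complete prime, and `X` is the join of the complete primes below it.
Countability of the primes is immediate because `V` is finite.
-/

open Relation

namespace OrgH

variable {V : Type*} {A : V → V → Prop}

theorem mem_primeOf_self (v : V) : v ∈ primeOf A v := ReflTransGen.refl

theorem leftClosed_primeOf (v : V) : LeftClosed A (primeOf A v) :=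
  fun _ h₁ _ h₂ h₃ => ReflTransGen.head ⟨h₂, h₃⟩ h₁

theorem primeOf_subset {X : Set V} (hX : LeftClosed A X) {v : V} (hv : v ∈ X) :
    primeOf A v ⊆ X := by
  intro w hw
  induction hw using ReflTransGen.head_induction_on with
  | refl => exact hv
  | head h _ ih => exact hX _ ih _ h.1 h.2

theorem _root_.ConflictFree.mono_s6 {W X : Set V} (hX : ConflictFree A X) (h : W ⊆ X) :
    ConflictFree A W :=
  fun a ha b hb => hX a (h ha) b (h hb)

/-- `[v]` as an element of `ℒ[𝒢]`; it is conflict-free because it lies inside `X`. -/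
def prime (X : OrgH A) {v : V} (hv : v ∈ (X : Set V)) : OrgH A :=
  ⟨primeOf A v, leftClosed_primeOf v, X.2.2.mono_s6 (primeOf_subset X.2.1 hv)⟩

theorem prime_le_iff {X Y : OrgH A} {v : V} (hv : v ∈ (X : Set V)) :
    prime X hv ≤ Y ↔ v ∈ (Y : Set V) :=
  ⟨fun h => h (mem_primeOf_self v), fun h => primeOf_subset Y.2.1 h⟩

theorem prime_le {X : OrgH A} {v : V} (hv : v ∈ (X : Set V)) : prime X hv ≤ X :=
  (prime_le_iff hv).2 hv

theorem coe_eq_biUnion_primeOf (X : OrgH A) :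
    (X : Set V) = ⋃ v ∈ (X : Set V), primeOf A v :=
  subset_antisymm (fun w hw => Set.mem_biUnion hw (mem_primeOf_self w))
    (Set.iUnion₂_subset fun _ hv => primeOf_subset X.2.1 hv)

theorem biUnion_mem_of_mem_upperBounds {S : Set (OrgH A)} {L : OrgH A}
    (hL : L ∈ upperBounds S) : (⋃ Y ∈ S, (Y : Set V)) ∈ OrgH A := by
  refine show LeftClosed A _ ∧ ConflictFree A _ from
    ⟨?_, L.2.2.mono_s6 (Set.iUnion₂_subset fun Y hY => hL hY)⟩
  intro v₁ h₁ v₂ h₂ h₃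
  obtain ⟨Y, hY, hv₁⟩ := Set.mem_iUnion₂.1 h₁
  exact Set.mem_biUnion hY (Y.2.1 _ hv₁ _ h₂ h₃)

theorem coe_eq_biUnion_of_isLUB {S : Set (OrgH A)} {L : OrgH A} (h : IsLUB S L) :
    (L : Set V) = ⋃ Y ∈ S, (Y : Set V) := by
  let U : OrgH A := ⟨_, biUnion_mem_of_mem_upperBounds h.1⟩
  have hU : U ∈ upperBounds S := fun Y hY => Set.subset_biUnion_of_mem (u := Subtype.val) hY
  exact subset_antisymm (h.2 hU) (Set.iUnion₂_subset fun Y hY => h.1 hY)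

theorem completePrime_prime {X : OrgH A} {v : V} (hv : v ∈ (X : Set V)) :
    CompletePrime (prime X hv) := by
  intro S L hL hle
  have hvL : v ∈ (L : Set V) := (prime_le_iff hv).1 hle
  rw [coe_eq_biUnion_of_isLUB hL] at hvL
  obtain ⟨Y, hY, hvY⟩ := Set.mem_iUnion₂.1 hvL
  exact ⟨Y, hY, (prime_le_iff hv).2 hvY⟩

theorem isLUB_of_prime_mem {X : OrgH A} {S : Set (OrgH A)} (hS : ∀ p ∈ S, p ≤ X)
    (hprime : ∀ v (hv : v ∈ (X : Set V)), prime X hv ∈ S) : IsLUB S X :=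
  ⟨hS, fun _ hY _ hv => (prime_le_iff hv).1 (hY (hprime _ hv))⟩

end OrgH

/-- Every element `X ∈ H` of `ℒ[𝒢] = (H, ⊆)` satisfies
`X = ∪{[v] | v ∈ X}`, and this union is the least upper bound of `{[v] | v ∈ X}`
in `(H, ⊆)`; hence every element of `ℒ[𝒢]` is the least upper bound of the
complete primes below it, i.e. `ℒ[𝒢]` is prime algebraic. -/
theorem stmt6 {V : Type*} [Finite V] (A : V → V → Prop) :
    (∀ X : ↥(OrgH A),
      (X : Set V) = (⋃ v ∈ (X : Set V), primeOf A v) ∧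
      IsLUB {p : ↥(OrgH A) | ∃ v ∈ (X : Set V), (p : Set V) = primeOf A v} X) ∧
    (∀ X : ↥(OrgH A), IsLUB {p : ↥(OrgH A) | CompletePrime p ∧ p ≤ X} X) ∧
    PrimeAlgebraic ↥(OrgH A) := by
  have hprimes (X : OrgH A) : IsLUB {p : OrgH A | CompletePrime p ∧ p ≤ X} X :=
    OrgH.isLUB_of_prime_mem (fun _ hp => hp.2) fun _ hv =>
      ⟨OrgH.completePrime_prime hv, OrgH.prime_le hv⟩
  refine ⟨fun X => ⟨OrgH.coe_eq_biUnion_primeOf X, ?_⟩, hprimes, (Set.toFinite _).countable,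
    hprimes⟩
  refine OrgH.isLUB_of_prime_mem ?_ fun v hv => ⟨v, hv, rfl⟩
  rintro p ⟨v, hv, hp⟩
  exact fun w hw => OrgH.primeOf_subset X.2.1 hv (hp ▸ hw)
end

section
/- Let N = (B, E, G) be an occurrence net. Then ξ[N] = (E, G* ∩ (E × E), #_N ∩ (E × E)) is an event structure: the relation G* restricted to E × E is a partial order on E, the conflict relation #_N restricted to E × E is symmetric and irreflexive, and conflict heredity holds, i.e. for all events e₁, e₂, e₃ ∈ E, if (e₂,e₁) ∈ G* and e₂ #_N e₃ then e₁ #_N e₃. -/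
open Relation Sum

/-- The preset `•x` of a node of a net with flow relation `flow`. -/
def preset {C E : Type*} (flow : (C ⊕ E) → (C ⊕ E) → Prop) (x : C ⊕ E) : Set (C ⊕ E) :=
  {y | flow y x}

/-- The postset `x•` of a node of a net with flow relation `flow`. -/
def postset {C E : Type*} (flow : (C ⊕ E) → (C ⊕ E) → Prop) (x : C ⊕ E) : Set (C ⊕ E) :=
  {y | flow x y}

/-- Causal relation `x ⇝ y` iff `(x,y) ∈ G⁺`. -/
def Causal {C E : Type*} (flow : (C ⊕ E) → (C ⊕ E) → Prop) (x y : C ⊕ E) : Prop :=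
  TransGen flow x y

/-- Conflict `x # y` : two distinct events with a common pre-node reach `x` and `y`. -/
def InConflict {C E : Type*} (flow : (C ⊕ E) → (C ⊕ E) → Prop) (x y : C ⊕ E) : Prop :=
  ∃ t₁ t₂ : E, t₁ ≠ t₂ ∧ (preset flow (inr t₁) ∩ preset flow (inr t₂)).Nonempty ∧
    ReflTransGen flow (inr t₁) x ∧ ReflTransGen flow (inr t₂) y

/-- Concurrency `x ∥ y` : neither causal (either way) nor conflict. -/
def Concurrent {C E : Type*} (flow : (C ⊕ E) → (C ⊕ E) → Prop) (x y : C ⊕ E) : Prop :=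
  ¬ Causal flow x y ∧ ¬ Causal flow y x ∧ ¬ InConflict flow x y

/-- The flow relation only connects conditions to events and events to conditions. -/
def IsNet {C E : Type*} (flow : (C ⊕ E) → (C ⊕ E) → Prop) : Prop :=
  ∀ x y, flow x y → (∃ (b : C) (e : E), x = inl b ∧ y = inr e) ∨
    ∃ (e : E) (b : C), x = inr e ∧ y = inl b

/-- Occurrence net: every condition has at most one pre-event, the net is acyclic,
every node has finitely many causal predecessors, no event is in self-conflict. -/
def IsOccurrenceNet {C E : Type*} (flow : (C ⊕ E) → (C ⊕ E) → Prop) : Prop :=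
  IsNet flow ∧
  (∀ b : C, (preset flow (inl b)).Subsingleton) ∧
  Irreflexive (Causal flow) ∧
  (∀ x : C ⊕ E, {y | Causal flow y x}.Finite) ∧
  ∀ e : E, ¬ InConflict flow (inr e) (inr e)

theorem Relation.ReflTransGen.antisymm_of_irrefl_transGen {α : Type*} {r : α → α → Prop}
    (hr : ∀ a, ¬ TransGen r a a) {a b : α} (hab : ReflTransGen r a b) (hba : ReflTransGen r b a) :
    a = b := by
  rcases reflTransGen_iff_eq_or_transGen.mp hab with rfl | hab
  · rfl
  · exact (hr a (hab.trans_left hba)).elim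

theorem isPartialOrder_reflTransGen_comp {α β : Type*} {r : β → β → Prop}
    (hr : ∀ b, ¬ TransGen r b b) {f : α → β} (hf : Function.Injective f) :
    IsPartialOrder α (fun a a' => ReflTransGen r (f a) (f a')) where
  refl _ := .refl
  trans _ _ _ := ReflTransGen.trans
  antisymm _ _ hab hba := hf (hab.antisymm_of_irrefl_transGen hr hba)

namespace InConflict

variable {C E : Type*} {flow : (C ⊕ E) → (C ⊕ E) → Prop} {x y z : C ⊕ E}

theorem symm (h : InConflict flow x y) : InConflict flow y x := by
  obtain ⟨t₁, t₂, hne, hpre, h₁, h₂⟩ := h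
  exact ⟨t₂, t₁, hne.symm, Set.inter_comm _ _ ▸ hpre, h₂, h₁⟩

theorem of_reflTransGen_left (h : InConflict flow x z) (hxy : ReflTransGen flow x y) :
    InConflict flow y z := by
  obtain ⟨t₁, t₂, hne, hpre, h₁, h₂⟩ := h
  exact ⟨t₁, t₂, hne, hpre, h₁.trans hxy, h₂⟩

end InConflict

/-- For an occurrence net `N = (B, E, G)`, `ξ[N]` is an event
structure: `G*` restricted to events is a partial order, the conflict relation
restricted to events is symmetric and irreflexive, and conflict heredity holds. -/
theorem stmt8 {C E : Type*} (flow : (C ⊕ E) → (C ⊕ E) → Prop)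
    (hocc : IsOccurrenceNet flow) :
    IsPartialOrder E (fun e e' => ReflTransGen flow (inr e) (inr e')) ∧
    Symmetric (fun e e' : E => InConflict flow (inr e) (inr e')) ∧
    Irreflexive (fun e e' : E => InConflict flow (inr e) (inr e')) ∧
    ∀ e₁ e₂ e₃ : E, ReflTransGen flow (inr e₂) (inr e₁) →
      InConflict flow (inr e₂) (inr e₃) → InConflict flow (inr e₁) (inr e₃) := by
  obtain ⟨-, -, hacyc, -, hself⟩ := hocc
  exact ⟨isPartialOrder_reflTransGen_comp hacyc inr_injective, fun _ _ h ↦ h.symm, hself,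
    fun _ _ _ h₂₁ h ↦ h.of_reflTransGen_left h₂₁⟩
end

section
/- Let ℰ = (E, ≤, ⊕) be an event structure with E finite and nonempty. Then the net η[ℰ] = (B, E, G) constructed from ℰ is an occurrence net: every condition of η[ℰ] has at most one pre-event, G⁺ is irreflexive, every node has a finite set of G⁺-predecessors, and no event of η[ℰ] is in self-conflict. -/
open Relation Sum

/-- An event structure `(E, ≤, ⊕)`: `≤` is a partial order, `⊕` is symmetric and
irreflexive, and conflict heredity holds. -/
def IsEventStructure {E : Type*} (le conf : E → E → Prop) : Prop :=
  IsPartialOrder E le ∧ Symmetric conf ∧ Irreflexive conf ∧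
  ∀ e₁ e₂ e₃ : E, le e₂ e₁ → conf e₂ e₃ → conf e₁ e₃

/-- `CE` : the subsets of `E` whose distinct elements are pairwise in conflict. -/
def CESet {E : Type*} (conf : E → E → Prop) : Set (Set E) :=
  {x | ∀ e₁ ∈ x, ∀ e₂ ∈ x, e₁ ≠ e₂ → conf e₁ e₂}

/-- The conditions of `η[ℰ]` : pairs `⟨e,x⟩` with `e ∈ E`, `x ∈ CE`,
`∀ e' ∈ x, e ≤ e' ∧ e ≠ e'`, encoded as `(some e, x)`, and pairs `⟨0,x⟩` with
`x ∈ CE`, `x ≠ ∅`, encoded as `(none, x)`. -/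
def EtaCond {E : Type*} (le conf : E → E → Prop) : Set (Option E × Set E) :=
  {p | p.2 ∈ CESet conf ∧
    ((∃ e : E, p.1 = some e ∧ ∀ e' ∈ p.2, le e e' ∧ e ≠ e') ∨
     (p.1 = none ∧ p.2.Nonempty))}

/-- The flow relation of `η[ℰ]` : a condition `⟨e,x⟩` (or `⟨0,x⟩`) flows to each
event in `x`, and an event `e` flows to each condition `⟨e,x⟩`. -/
def EtaFlow {E : Type*} (le conf : E → E → Prop) :
    (↥(EtaCond le conf) ⊕ E) → (↥(EtaCond le conf) ⊕ E) → Prop :=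
  fun x y =>
    match x, y with
    | inl b, inr e' => e' ∈ (b : Option E × Set E).2
    | inr e, inl b => (b : Option E × Set E).1 = some e
    | _, _ => False

/-!
Every flow path of `η[ℰ]` leaving an event `t` only reaches events strictly above `t` in `≤`
and conditions `⟨e, x⟩` with `t ≤ e`, because an arc `⟨e, x⟩ → e'` requires `e < e'`. Hence `G⁺`
has no cycles, and two events reached from `t₁`, `t₂` lie above them. A self-conflict of `e`
would give `t₁ ≠ t₂` below `e` sharing a pre-condition `⟨_, x⟩`, so `t₁ ⊕ t₂` as `x ∈ CE`,
and conflict heredity pushes this up to `e ⊕ e`, contradicting irreflexivity. Finiteness of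
`E` makes the whole net finite.
-/

namespace EtaFlow

variable {E : Type*} {le conf : E → E → Prop}

theorem le_ne_of_fst_eq_some {b : EtaCond le conf} {e e' : E} (hb : b.1.1 = some e)
    (he' : e' ∈ b.1.2) : le e e' ∧ e ≠ e' := by
  obtain ⟨-, ⟨e₀, he₀, hx⟩ | ⟨hnone, -⟩⟩ := b.2
  · obtain rfl : e₀ = e := Option.some_injective _ (he₀.symm.trans hb)
    exact hx e' he'
  · exact Option.some_ne_none e (hb.symm.trans hnone) |>.elim

theorem isNet : IsNet (EtaFlow le conf) := by
  rintro (b | e) (b' | e') h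
  · exact h.elim
  · exact Or.inl ⟨b, e', rfl, rfl⟩
  · exact Or.inr ⟨e, b', rfl, rfl⟩
  · exact h.elim

theorem preset_inl_subsingleton (b : EtaCond le conf) :
    (preset (EtaFlow le conf) (inl b)).Subsingleton := by
  rintro (_ | e) he (_ | e') he'
  · exact he.elim
  · exact he.elim
  · exact he'.elim
  · exact congrArg inr (Option.some_injective _ (he.symm.trans he'))

def Above (t : E) : EtaCond le conf ⊕ E → Prop
  | inl b => ∃ e, b.1.1 = some e ∧ le t e
  | inr e => le t e ∧ t ≠ e

theorem above_of_transGen (hle : IsPartialOrder E le) {t : E} {x : EtaCond le conf ⊕ E}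
    (h : TransGen (EtaFlow le conf) (inr t) x) : Above t x := by
  induction h with
  | @single y hstep =>
    rcases y with _ | _
    · exact ⟨t, hstep, hle.refl t⟩
    · exact hstep.elim
  | @tail y z _ hstep ih =>
    rcases y with b | e <;> rcases z with _ | e''
    · exact hstep.elim
    · obtain ⟨e, hb, hte⟩ := ih
      obtain ⟨hee'', hne⟩ := le_ne_of_fst_eq_some hb hstep
      refine ⟨hle.trans _ _ _ hte hee'', ?_⟩
      rintro rfl
      exact hne (hle.antisymm _ _ hee'' hte)
    · exact ⟨e, hstep, ih.1⟩
    · exact hstep.elim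

theorem le_of_reflTransGen (hle : IsPartialOrder E le) {t e : E}
    (h : ReflTransGen (EtaFlow le conf) (inr t) (inr e)) : le t e := by
  rcases reflTransGen_iff_eq_or_transGen.mp h with heq | htg
  · cases heq
    exact hle.refl t
  · exact (above_of_transGen hle htg).1

theorem causal_irreflexive (hle : IsPartialOrder E le) :
    Irreflexive (Causal (EtaFlow le conf)) := by
  have not_cycle_inr : ∀ t, ¬ TransGen (EtaFlow le conf) (inr t) (inr t) :=
    fun t h => (above_of_transGen hle h).2 rfl
  rintro (_ | t) h
  · cases h with
    | single hstep => exact hstep.elim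
    | @tail y _ h hstep =>
      rcases y with _ | e
      · exact hstep.elim
      · exact not_cycle_inr e (h.head hstep)
  · exact not_cycle_inr t h

theorem not_inConflict_self (hES : IsEventStructure le conf) (e : E) :
    ¬ InConflict (EtaFlow le conf) (inr e) (inr e) := by
  obtain ⟨hle, hsymm, hirr, hhered⟩ := hES
  rintro ⟨t₁, t₂, hne, ⟨(b | t), hb₁, hb₂⟩, h₁, h₂⟩
  · have hconf : conf t₁ t₂ := b.2.1 t₁ hb₁ t₂ hb₂ hne
    have he₂ : conf e t₂ := hhered e t₁ t₂ (le_of_reflTransGen hle h₁) hconf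
    exact hirr e (hhered e t₂ e (le_of_reflTransGen hle h₂) (hsymm he₂))
  · exact hb₁.elim

end EtaFlow

theorem stmt10_general {E : Type*} [Finite E] (le conf : E → E → Prop)
    (hES : IsEventStructure le conf) :
    IsOccurrenceNet (EtaFlow le conf) :=
  ⟨EtaFlow.isNet, EtaFlow.preset_inl_subsingleton, EtaFlow.causal_irreflexive hES.1,
    fun _ => Set.toFinite _, EtaFlow.not_inConflict_self hES⟩

/-- For a finite nonempty event structure `ℰ = (E, ≤, ⊕)`, the
constructed net `η[ℰ]` is an occurrence net. -/
theorem stmt10 {E : Type*} [Finite E] [Nonempty E] (le conf : E → E → Prop)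
    (hES : IsEventStructure le conf) :
    IsOccurrenceNet (EtaFlow le conf) :=
  stmt10_general le conf hES
end

section
/- Let ℰ = (E, ≤, ⊕) be an event structure with E finite and nonempty, and let η[ℰ] = (B, E, G) be the net constructed from ℰ. Then for all events e, e' ∈ E, (e, e') ∈ G* if and only if e ≤ e'; that is, the causality relation of η[ℰ] restricted to events coincides with ≤. -/
open Relation Sum

/-!
The net `η[ℰ]` is shaped so that causality can only climb `≤`: an event `e` feeds exactly the
conditions `⟨e, x⟩`, and such a condition feeds only events of `x`, all of which lie above `e`.
So "the node is an event above `e`, or a condition `⟨g, x⟩` with `e ≤ g`" is invariant along the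
flow from `e`, which gives `G* ⊆ ≤` by transitivity. Conversely, for `e < e'` the condition
`⟨e, {e'}⟩` is a two-step path from `e` to `e'`.
-/

section EtaNet

variable {E : Type*} {le conf : E → E → Prop}

theorem le_of_mem_etaCond {b : EtaCond le conf} {g f : E} (hg : b.1.1 = some g)
    (hf : f ∈ b.1.2) : le g f := by
  obtain ⟨-, ⟨g', hg', hx⟩ | ⟨hnone, -⟩⟩ := b.property
  · obtain rfl : g = g' := Option.some.inj (hg.symm.trans hg')
    exact (hx f hf).1
  · simp [hg] at hnone

variable (le conf) in
def EtaAbove (e : E) : EtaCond le conf ⊕ E → Prop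
  | inl b => ∃ g, b.1.1 = some g ∧ le e g
  | inr f => le e f

theorem EtaAbove.etaFlow [IsTrans E le] {e : E} {x y : EtaCond le conf ⊕ E}
    (hx : EtaAbove le conf e x) (hxy : EtaFlow le conf x y) : EtaAbove le conf e y := by
  match x, y with
  | inl b, inr f =>
    obtain ⟨g, hg, heg⟩ := hx
    exact trans_of le heg (le_of_mem_etaCond hg hxy)
  | inr f, inl b => exact ⟨f, hxy, hx⟩
  | inl _, inl _ => exact hxy.elim
  | inr _, inr _ => exact hxy.elim

theorem EtaAbove.reflTransGen_etaFlow [IsTrans E le] {e : E} {x y : EtaCond le conf ⊕ E}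
    (hx : EtaAbove le conf e x) (hxy : ReflTransGen (EtaFlow le conf) x y) :
    EtaAbove le conf e y := by
  induction hxy with
  | refl => exact hx
  | tail _ hstep ih => exact ih.etaFlow hstep

theorem le_of_reflTransGen_etaFlow [Std.Refl le] [IsTrans E le] {e e' : E}
    (h : ReflTransGen (EtaFlow le conf) (inr e) (inr e')) : le e e' :=
  EtaAbove.reflTransGen_etaFlow (x := inr e) (refl_of le e) h

theorem reflTransGen_etaFlow_of_le {e e' : E} (h : le e e') :
    ReflTransGen (EtaFlow le conf) (inr e) (inr e') := by
  rcases eq_or_ne e e' with rfl | hne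
  · exact ReflTransGen.refl
  have hb : ((some e, {e'}) : Option E × Set E) ∈ EtaCond le conf := by
    refine ⟨fun e₁ h₁ e₂ h₂ h₁₂ => absurd (h₁.trans h₂.symm) h₁₂, Or.inl ⟨e, rfl, ?_⟩⟩
    rintro _ rfl
    exact ⟨h, hne⟩
  have hin : EtaFlow le conf (inr e) (inl ⟨_, hb⟩) := rfl
  have hout : EtaFlow le conf (inl ⟨_, hb⟩) (inr e') := Set.mem_singleton e'
  exact ReflTransGen.head hin (ReflTransGen.single hout)

end EtaNet

theorem stmt11_general {E : Type*} (le conf : E → E → Prop)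
    (hES : IsEventStructure le conf) :
    ∀ e e' : E, ReflTransGen (EtaFlow le conf) (inr e) (inr e') ↔ le e e' := by
  have : IsPartialOrder E le := hES.1
  exact fun _ _ => ⟨le_of_reflTransGen_etaFlow, reflTransGen_etaFlow_of_le⟩

/-- For a finite nonempty event structure `ℰ = (E, ≤, ⊕)` and
events `e, e'`, `(e,e') ∈ G*` in `η[ℰ]` iff `e ≤ e'`. -/
theorem stmt11 {E : Type*} [Finite E] [Nonempty E] (le conf : E → E → Prop)
    (hES : IsEventStructure le conf) :
    ∀ e e' : E, ReflTransGen (EtaFlow le conf) (inr e) (inr e') ↔ le e e' :=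
  stmt11_general le conf hES
end

section
/- Let ℰ = (E, ≤, ⊕) be an event structure with E finite and nonempty, and let η[ℰ] = (B, E, G) be the net constructed from ℰ. Then for all events e, e' ∈ E, e #_{η[ℰ]} e' if and only if e ⊕ e'; that is, the conflict relation of η[ℰ] restricted to events coincides with ⊕. -/
open Relation Sum

/-! A condition `⟨s, x⟩` of `η[ℰ]` only feeds events above `s`, so every event reachable from an
event `t` lies above `t`. Two distinct events with a common pre-condition `⟨_, x⟩` both lie in
`x ∈ CE`, hence are in conflict, and conflict heredity lifts this to the events they reach.
Conversely, `e ⊕ e'` share the pre-condition `⟨0, {e, e'}⟩`. -/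

section

variable {E : Type*} {le conf : E → E → Prop}

theorem le_of_reflTransGen_etaFlow_s12 [IsPreorder E le] {t : E} {z : ↥(EtaCond le conf) ⊕ E}
    (h : ReflTransGen (EtaFlow le conf) (inr t) z) :
    z.elim (fun b : ↥(EtaCond le conf) => ∃ s ∈ (b : Option E × Set E).1, le t s) (le t) := by
  induction h with
  | refl => exact refl_of le t
  | @tail m z _ hmz ih =>
    rcases m with b | s <;> rcases z with b' | e <;> simp only [EtaFlow] at hmz
    · obtain ⟨s, hs, hts⟩ := ih
      obtain ⟨-, ⟨s', hs', hs'x⟩ | ⟨hnone, -⟩⟩ := b.2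
      · cases (Option.mem_def.mp hs).symm.trans hs'
        exact _root_.trans hts (hs'x e hmz).1
      · simp [hnone] at hs
    · exact ⟨s, hmz, ih⟩

theorem le_of_reflTransGen_etaFlow_inr [IsPreorder E le] {t e : E}
    (h : ReflTransGen (EtaFlow le conf) (inr t) (inr e)) : le t e :=
  le_of_reflTransGen_etaFlow_s12 h

theorem conf_of_mem_preset_etaFlow {t₁ t₂ : E} {x : ↥(EtaCond le conf) ⊕ E}
    (h₁ : x ∈ preset (EtaFlow le conf) (inr t₁)) (h₂ : x ∈ preset (EtaFlow le conf) (inr t₂))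
    (hne : t₁ ≠ t₂) : conf t₁ t₂ := by
  rcases x with b | s
  · exact b.2.1 t₁ h₁ t₂ h₂ hne
  · exact h₁.elim

theorem conf_of_le_of_le_of_conf (hsymm : Symmetric conf)
    (hhered : ∀ e₁ e₂ e₃ : E, le e₂ e₁ → conf e₂ e₃ → conf e₁ e₃) {t₁ t₂ e e' : E}
    (h₁ : le t₁ e) (h₂ : le t₂ e') (hc : conf t₁ t₂) : conf e e' :=
  hsymm (hhered _ _ _ h₂ (hsymm (hhered _ _ _ h₁ hc)))

theorem pair_mem_CESet (hsymm : Symmetric conf) {e e' : E} (hc : conf e e') :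
    ({e, e'} : Set E) ∈ CESet conf := by
  rintro a (rfl | rfl) b (rfl | rfl) hab <;>
    first | exact (hab rfl).elim | exact hc | exact hsymm hc

theorem inConflict_etaFlow_of_conf (hsymm : Symmetric conf) (hirr : Irreflexive conf)
    {e e' : E} (hc : conf e e') : InConflict (EtaFlow le conf) (inr e) (inr e') := by
  have hb : ((none, {e, e'}) : Option E × Set E) ∈ EtaCond le conf :=
    ⟨pair_mem_CESet hsymm hc, Or.inr ⟨rfl, e, Set.mem_insert e _⟩⟩
  refine ⟨e, e', fun h => hirr e (h ▸ hc), ⟨inl ⟨_, hb⟩, ?_, ?_⟩, .refl, .refl⟩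
  · exact Set.mem_insert e _
  · exact Set.mem_insert_of_mem e rfl

end

theorem stmt12_general {E : Type*} (le conf : E → E → Prop)
    (hES : IsEventStructure le conf) :
    ∀ e e' : E, InConflict (EtaFlow le conf) (inr e) (inr e') ↔ conf e e' := by
  obtain ⟨hpo, hsymm, hirr, hhered⟩ := hES
  intro e e'
  refine ⟨?_, inConflict_etaFlow_of_conf hsymm hirr⟩
  rintro ⟨t₁, t₂, hne, ⟨x, hx₁, hx₂⟩, h₁, h₂⟩
  exact conf_of_le_of_le_of_conf hsymm hhered (le_of_reflTransGen_etaFlow_inr h₁)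
    (le_of_reflTransGen_etaFlow_inr h₂) (conf_of_mem_preset_etaFlow hx₁ hx₂ hne)

/-- For a finite nonempty event structure `ℰ = (E, ≤, ⊕)` and
events `e, e'`, `e #_{η[ℰ]} e'` iff `e ⊕ e'`. -/
theorem stmt12 {E : Type*} [Finite E] [Nonempty E] (le conf : E → E → Prop)
    (hES : IsEventStructure le conf) :
    ∀ e e' : E, InConflict (EtaFlow le conf) (inr e) (inr e') ↔ conf e e' :=
  stmt12_general le conf hES
end

section
/- Let N = (B, E, G) be an occurrence net and let b ∈ B be a condition that is subsumed by a condition b' ∈ B, b ≠ b', i.e. •b = •b' and b• ⊆ b'•. Let N' be the net obtained from N by deleting b and all flow arcs incident to b. Then the ordering relations among events are unchanged: for all events e, f ∈ E, (e,f) ∈ G'* iff (e,f) ∈ G*, and e #_{N'} f iff e #_N f; consequently the concurrency relation restricted to events is also unchanged. -/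
open Relation Sum

/-- The flow relation of the net obtained by deleting condition `b` together with
all flow arcs incident to it. -/
def DeleteCond {C E : Type*} (flow : (C ⊕ E) → (C ⊕ E) → Prop) (b : C) :
    (C ⊕ E) → (C ⊕ E) → Prop :=
  fun x y => flow x y ∧ x ≠ inl b ∧ y ≠ inl b

/-! Redirecting every arc at `b` to `b'` maps each arc of the net to an arc of the net without `b`
(`•b = •b'` handles the incoming arcs, `b• ⊆ b'•` the outgoing ones) and fixes every event. Such a
retraction onto a subnet transports paths and common pre-conditions between events back into the
subnet, so causality, conflict and concurrency among events are the same in both nets. -/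

structure IsEventRetraction {C E : Type*} (sub flow : (C ⊕ E) → (C ⊕ E) → Prop)
    (σ : C ⊕ E → C ⊕ E) : Prop where
  le : sub ≤ flow
  map_inr : ∀ t : E, σ (inr t) = inr t
  map_rel : ∀ x y, flow x y → sub (σ x) (σ y)

namespace IsEventRetraction

variable {C E : Type*} {sub flow : (C ⊕ E) → (C ⊕ E) → Prop} {σ : C ⊕ E → C ⊕ E}

theorem reflTransGen_inr_iff (hσ : IsEventRetraction sub flow σ) (e f : E) :
    ReflTransGen sub (inr e) (inr f) ↔ ReflTransGen flow (inr e) (inr f) := by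
  refine ⟨fun h => ReflTransGen.mono hσ.le _ _ h, fun h => ?_⟩
  simpa only [Function.onFun, hσ.map_inr] using ReflTransGen.lift σ hσ.map_rel _ _ h

theorem causal_inr_iff (hσ : IsEventRetraction sub flow σ) (e f : E) :
    Causal sub (inr e) (inr f) ↔ Causal flow (inr e) (inr f) := by
  refine ⟨fun h => TransGen.mono hσ.le _ _ h, fun h => ?_⟩
  simpa only [Causal, Function.onFun, hσ.map_inr] using TransGen.lift σ hσ.map_rel _ _ h

theorem inConflict_inr_iff (hσ : IsEventRetraction sub flow σ) (e f : E) :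
    InConflict sub (inr e) (inr f) ↔ InConflict flow (inr e) (inr f) := by
  constructor
  · rintro ⟨t₁, t₂, hne, ⟨z, hz₁, hz₂⟩, h₁, h₂⟩
    exact ⟨t₁, t₂, hne, ⟨z, hσ.le _ _ hz₁, hσ.le _ _ hz₂⟩,
      ReflTransGen.mono hσ.le _ _ h₁, ReflTransGen.mono hσ.le _ _ h₂⟩
  · rintro ⟨t₁, t₂, hne, ⟨z, hz₁, hz₂⟩, h₁, h₂⟩
    have hz₁' : sub (σ z) (inr t₁) := by simpa only [hσ.map_inr] using hσ.map_rel _ _ hz₁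
    have hz₂' : sub (σ z) (inr t₂) := by simpa only [hσ.map_inr] using hσ.map_rel _ _ hz₂
    exact ⟨t₁, t₂, hne, ⟨σ z, hz₁', hz₂'⟩,
      (hσ.reflTransGen_inr_iff t₁ e).2 h₁, (hσ.reflTransGen_inr_iff t₂ f).2 h₂⟩

theorem concurrent_inr_iff (hσ : IsEventRetraction sub flow σ) (e f : E) :
    Concurrent sub (inr e) (inr f) ↔ Concurrent flow (inr e) (inr f) := by
  rw [Concurrent, Concurrent, hσ.causal_inr_iff, hσ.causal_inr_iff, hσ.inConflict_inr_iff]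

end IsEventRetraction

def redirectCond {C E : Type*} [DecidableEq C] (b b' : C) : C ⊕ E → C ⊕ E :=
  Sum.map (fun c => if c = b then b' else c) id

theorem redirectCond_ne {C E : Type*} [DecidableEq C] {b b' : C} (hne : b ≠ b')
    (x : C ⊕ E) : redirectCond b b' x ≠ inl b := by
  rcases x with c | t
  · by_cases hc : c = b <;> simp [redirectCond, hc, Ne.symm hne]
  · simp [redirectCond]

theorem isEventRetraction_deleteCond {C E : Type*} [DecidableEq C]
    {flow : (C ⊕ E) → (C ⊕ E) → Prop} (hnet : IsNet flow) {b b' : C} (hne : b ≠ b')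
    (hpre : preset flow (inl b) = preset flow (inl b'))
    (hpost : postset flow (inl b) ⊆ postset flow (inl b')) :
    IsEventRetraction (DeleteCond flow b) flow (redirectCond b b') := by
  refine ⟨fun _ _ h => h.1, fun _ => rfl, fun x y hxy => ?_⟩
  refine ⟨?_, redirectCond_ne hne x, redirectCond_ne hne y⟩
  rcases hnet x y hxy with ⟨c, t, rfl, rfl⟩ | ⟨t, c, rfl, rfl⟩
  · by_cases hc : c = b
    · subst hc
      have h : flow (inl b') (inr t) := hpost hxy
      simpa [redirectCond] using h
    · simpa [redirectCond, hc] using hxy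
  · by_cases hc : c = b
    · subst hc
      have h : flow (inr t) (inl b') := (hpre ▸ hxy : inr t ∈ preset flow (inl b'))
      simpa [redirectCond] using h
    · simpa [redirectCond, hc] using hxy

/-- Deleting a subsumed condition `b` (with `•b = •b'` and
`b• ⊆ b'•` for some `b' ≠ b`) from an occurrence net leaves the ordering
relations among events unchanged: causality (`G*`), conflict, and hence also
concurrency restricted to events are preserved. -/
theorem stmt14 {C E : Type*} (flow : (C ⊕ E) → (C ⊕ E) → Prop)
    (hocc : IsOccurrenceNet flow) (b b' : C) (hne : b ≠ b')
    (hpre : preset flow (inl b) = preset flow (inl b'))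
    (hpost : postset flow (inl b) ⊆ postset flow (inl b')) :
    ∀ e f : E,
      (ReflTransGen (DeleteCond flow b) (inr e) (inr f) ↔
        ReflTransGen flow (inr e) (inr f)) ∧
      (InConflict (DeleteCond flow b) (inr e) (inr f) ↔ InConflict flow (inr e) (inr f)) ∧
      (Concurrent (DeleteCond flow b) (inr e) (inr f) ↔ Concurrent flow (inr e) (inr f)) := by
  classical
  have hσ := isEventRetraction_deleteCond hocc.1 hne hpre hpost
  exact fun e f =>
    ⟨hσ.reflTransGen_inr_iff e f, hσ.inConflict_inr_iff e f, hσ.concurrent_inr_iff e f⟩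
end

section
/- Let N = (B, E, G) be an occurrence net and let b ∈ B be a redundant condition, i.e. either b• = ∅ and there exists b' ∈ B with b' ≠ b and b' ∈ (•b)•, or •b = ∅ and there exists b' ∈ B with b' ≠ b, b• = b'• and •b' ≠ ∅. Let N' be the net obtained from N by deleting b and all flow arcs incident to b. Then the ordering relations among events are unchanged: for all events e, f ∈ E, (e,f) ∈ G'* iff (e,f) ∈ G*, and e #_{N'} f iff e #_N f; consequently the concurrency relation restricted to events is also unchanged. -/
open Relation Sum

/-- A condition `b` is redundant: either `b• = ∅` and some other condition
`b' ∈ (•b)•`, or `•b = ∅` and some other condition `b'` has `b• = b'•` and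
`•b' ≠ ∅`. -/
def Redundant {C E : Type*} (flow : (C ⊕ E) → (C ⊕ E) → Prop) (b : C) : Prop :=
  (postset flow (inl b) = ∅ ∧
    ∃ b' : C, b' ≠ b ∧ ∃ x ∈ preset flow (inl b), flow x (inl b')) ∨
  (preset flow (inl b) = ∅ ∧
    ∃ b' : C, b' ≠ b ∧ postset flow (inl b) = postset flow (inl b') ∧
      (preset flow (inl b')).Nonempty)

/-!
A redundant condition `b` is a sink (`b• = ∅`) or a source (`•b = ∅`) of the flow relation, so
no path between two nodes other than `b` can pass through `b`: paths between events survive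
the deletion of `b`, and causality is unchanged. Conflict needs one more observation: two
events whose only common pre-condition is `b` cannot exist when `b` is a sink, and when `b` is
a source its postset is that of the condition `b' ≠ b`, which then serves as common
pre-condition in the reduced net.
-/

section DeleteCond

variable {C E : Type*} {flow : (C ⊕ E) → (C ⊕ E) → Prop} {b : C} {x y : C ⊕ E}

theorem deleteCond_le : DeleteCond flow b ≤ flow :=
  fun _ _ h => h.1

theorem transGen_deleteCond_of_postset_eq_empty (hb : postset flow (inl b) = ∅)
    (hy : y ≠ inl b) (h : TransGen flow x y) : TransGen (DeleteCond flow b) x y := by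
  have hout : ∀ {u v}, flow u v → u ≠ inl b := by
    rintro u v huv rfl
    exact (Set.eq_empty_iff_forall_notMem.mp hb v) huv
  induction h with
  | single hxy => exact .single ⟨hxy, hout hxy, hy⟩
  | tail _ hcd ih => exact (ih (hout hcd)).tail ⟨hcd, hout hcd, hy⟩

theorem transGen_deleteCond_of_preset_eq_empty (hb : preset flow (inl b) = ∅)
    (hx : x ≠ inl b) (h : TransGen flow x y) : TransGen (DeleteCond flow b) x y := by
  have hswap : TransGen (DeleteCond (Function.swap flow) b) y x :=
    transGen_deleteCond_of_postset_eq_empty hb hx (transGen_swap.mpr h)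
  exact transGen_swap.mp (TransGen.mono (fun _ _ ⟨h, hu, hv⟩ => ⟨h, hv, hu⟩) _ _ hswap)

theorem transGen_deleteCond_iff (hb : postset flow (inl b) = ∅ ∨ preset flow (inl b) = ∅)
    (hx : x ≠ inl b) (hy : y ≠ inl b) :
    TransGen (DeleteCond flow b) x y ↔ TransGen flow x y := by
  refine ⟨TransGen.mono deleteCond_le _ _, fun h => ?_⟩
  rcases hb with hb | hb
  · exact transGen_deleteCond_of_postset_eq_empty hb hy h
  · exact transGen_deleteCond_of_preset_eq_empty hb hx h

theorem reflTransGen_deleteCond_iff (hb : postset flow (inl b) = ∅ ∨ preset flow (inl b) = ∅)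
    (hx : x ≠ inl b) (hy : y ≠ inl b) :
    ReflTransGen (DeleteCond flow b) x y ↔ ReflTransGen flow x y := by
  simp only [reflTransGen_iff_eq_or_transGen, transGen_deleteCond_iff hb hx hy]

theorem Redundant.postset_eq_empty_or_preset_eq_empty (hred : Redundant flow b) :
    postset flow (inl b) = ∅ ∨ preset flow (inl b) = ∅ :=
  hred.imp (fun h => h.1) (fun h => h.1)

theorem Redundant.preset_inter_preset_deleteCond_nonempty (hred : Redundant flow b)
    {t₁ t₂ : E} (h : (preset flow (inr t₁) ∩ preset flow (inr t₂)).Nonempty) :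
    (preset (DeleteCond flow b) (inr t₁) ∩ preset (DeleteCond flow b) (inr t₂)).Nonempty := by
  obtain ⟨c, hc₁, hc₂⟩ := h
  by_cases hcb : c = inl b
  · subst hcb
    rcases hred with ⟨hpost, -⟩ | ⟨-, b', hb', hpost, -⟩
    · exact absurd hc₁ (Set.eq_empty_iff_forall_notMem.mp hpost _)
    · have hb'b : (inl b' : C ⊕ E) ≠ inl b := by simpa using hb'
      have hc₁' : flow (inl b') (inr t₁) := by
        change inr t₁ ∈ postset flow (inl b')
        exact hpost ▸ hc₁
      have hc₂' : flow (inl b') (inr t₂) := by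
        change inr t₂ ∈ postset flow (inl b')
        exact hpost ▸ hc₂
      exact ⟨inl b', ⟨hc₁', hb'b, inr_ne_inl⟩, ⟨hc₂', hb'b, inr_ne_inl⟩⟩
  · exact ⟨c, ⟨hc₁, hcb, inr_ne_inl⟩, ⟨hc₂, hcb, inr_ne_inl⟩⟩

theorem Redundant.inConflict_deleteCond_iff (hred : Redundant flow b)
    (hx : x ≠ inl b) (hy : y ≠ inl b) :
    InConflict (DeleteCond flow b) x y ↔ InConflict flow x y := by
  have hb := hred.postset_eq_empty_or_preset_eq_empty
  constructor
  · rintro ⟨t₁, t₂, hne, ⟨c, hc₁, hc₂⟩, h₁, h₂⟩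
    exact ⟨t₁, t₂, hne, ⟨c, hc₁.1, hc₂.1⟩,
      ReflTransGen.mono deleteCond_le _ _ h₁, ReflTransGen.mono deleteCond_le _ _ h₂⟩
  · rintro ⟨t₁, t₂, hne, hpre, h₁, h₂⟩
    exact ⟨t₁, t₂, hne, hred.preset_inter_preset_deleteCond_nonempty hpre,
      (reflTransGen_deleteCond_iff hb inr_ne_inl hx).mpr h₁,
      (reflTransGen_deleteCond_iff hb inr_ne_inl hy).mpr h₂⟩

theorem Redundant.concurrent_deleteCond_iff (hred : Redundant flow b)
    (hx : x ≠ inl b) (hy : y ≠ inl b) :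
    Concurrent (DeleteCond flow b) x y ↔ Concurrent flow x y := by
  have hb := hred.postset_eq_empty_or_preset_eq_empty
  simp only [Concurrent, Causal, transGen_deleteCond_iff hb hx hy,
    transGen_deleteCond_iff hb hy hx, hred.inConflict_deleteCond_iff hx hy]

end DeleteCond

theorem stmt15_general {C E : Type*} (flow : (C ⊕ E) → (C ⊕ E) → Prop)
    (b : C) (hred : Redundant flow b) :
    ∀ e f : E,
      (ReflTransGen (DeleteCond flow b) (inr e) (inr f) ↔
        ReflTransGen flow (inr e) (inr f)) ∧
      (InConflict (DeleteCond flow b) (inr e) (inr f) ↔ InConflict flow (inr e) (inr f)) ∧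
      (Concurrent (DeleteCond flow b) (inr e) (inr f) ↔ Concurrent flow (inr e) (inr f)) :=
  fun _ _ =>
    ⟨reflTransGen_deleteCond_iff hred.postset_eq_empty_or_preset_eq_empty inr_ne_inl inr_ne_inl,
      hred.inConflict_deleteCond_iff inr_ne_inl inr_ne_inl,
      hred.concurrent_deleteCond_iff inr_ne_inl inr_ne_inl⟩

/-- Deleting a redundant condition `b` from an occurrence net
leaves the ordering relations among events unchanged: causality (`G*`), conflict,
and hence also concurrency restricted to events are preserved. -/
theorem stmt15 {C E : Type*} (flow : (C ⊕ E) → (C ⊕ E) → Prop)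
    (hocc : IsOccurrenceNet flow) (b : C) (hred : Redundant flow b) :
    ∀ e f : E,
      (ReflTransGen (DeleteCond flow b) (inr e) (inr f) ↔
        ReflTransGen flow (inr e) (inr f)) ∧
      (InConflict (DeleteCond flow b) (inr e) (inr f) ↔ InConflict flow (inr e) (inr f)) ∧
      (Concurrent (DeleteCond flow b) (inr e) (inr f) ↔ Concurrent flow (inr e) (inr f)) :=
  stmt15_general flow b hred
end
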